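/- Let Ω ⊂ ℝⁿ be an open bounded set with the Lebesgue measure and let (X,d) be a locally compact Hadamard space. Let T, R ∈ L²(Ω,X), let ε > 0, and let {φ⁽ʲ⁾}_{j∈ℕ} and φ̂ be admissible diffeomorphisms of Ω with det Dφ⁽ʲ⁾(x) ≥ ε and det Dφ̂(x) ≥ ε for all x ∈ Ω, j ∈ ℕ, such that sup_{x∈Ω} |φ⁽ʲ⁾(x) − φ̂(x)| → 0 as j → ∞. Then lim_{j→∞} ∫_Ω d(T(φ⁽ʲ⁾(x)), R(x))² dx = ∫_Ω d(T(φ̂(x)), R(x))² dx. -/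

import Mathlib

open MeasureTheory Set Filter

/-- An admissible diffeomorphism of `Ω`: a bijection of `Ω` onto itself which is
continuously differentiable on `Ω` with continuously differentiable inverse. -/
def IsAdmissibleDiffeo {n : ℕ} (Ω : Set (EuclideanSpace ℝ (Fin n)))
    (φ : EuclideanSpace ℝ (Fin n) → EuclideanSpace ℝ (Fin n)) : Prop :=
  Set.BijOn φ Ω Ω ∧ ContDiffOn ℝ 1 φ Ω ∧
    ∃ ψ : EuclideanSpace ℝ (Fin n) → EuclideanSpace ℝ (Fin n),
      (∀ x ∈ Ω, ψ (φ x) = x) ∧ (∀ x ∈ Ω, φ (ψ x) = x) ∧ ContDiffOn ℝ 1 ψ Ω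

/-!
Geodesics together with local compactness and completeness make closed balls compact
(Hopf–Rinow), so `X` is separable and the Kuratowski embedding turns `T` into a function `G`
with values in `ℓ^∞`, square integrable on `Ω`, with `‖G x - G y‖ = d(T x, T y)`.
The Jacobian bound gives `∫_Ω h ∘ φ ≤ ε⁻¹ ∫_Ω h` for every admissible `φ`, so composition
with the `φ⁽ʲ⁾` and `φ̂` is uniformly bounded on `L²(Ω)`. Approximating `G` in `L²(Ω)` by a
compactly supported continuous, hence uniformly continuous, function then gives
`‖G ∘ φ⁽ʲ⁾ - G ∘ φ̂‖_{L²(Ω)} → 0`. Finally `|d(T φ⁽ʲ⁾, R) - d(T φ̂, R)| ≤ d(T φ⁽ʲ⁾, T φ̂)`,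
and the triangle inequality for the `L²` seminorm, which holds in `[0, ∞]`, yields
convergence of the data terms.
-/

open scoped ENNReal Topology

section Geodesic

open Metric

variable {X : Type*} [MetricSpace X]

def IsGeodesicSpace (X : Type*) [MetricSpace X] : Prop :=
  ∀ x y : X, ∃ γ : ℝ → X, γ 0 = x ∧ γ 1 = y ∧
    ∀ s ∈ Icc (0:ℝ) 1, ∀ t ∈ Icc (0:ℝ) 1, dist (γ s) (γ t) = |s - t| * dist x y

theorem IsGeodesicSpace.exists_dist_le_of_dist_le_add (hX : IsGeodesicSpace X) {a x : X}
    {r t : ℝ} (hr : 0 ≤ r) (ht : 0 ≤ t) (hx : dist x a ≤ r + t) :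
    ∃ z, dist z a ≤ r ∧ dist x z ≤ t := by
  rcases le_or_gt (dist x a) r with hxr | hxr
  · exact ⟨x, hxr, by simpa using ht⟩
  obtain ⟨γ, hγ0, hγ1, hγ⟩ := hX a x
  have hd : 0 < dist a x := by rw [dist_comm]; linarith
  have hτ : r / dist a x ∈ Icc (0:ℝ) 1 :=
    ⟨by positivity, (div_le_one hd).2 (by rw [dist_comm]; exact hxr.le)⟩
  refine ⟨γ (r / dist a x), ?_, ?_⟩
  · have := hγ _ hτ 0 (left_mem_Icc.2 zero_le_one)
    rw [hγ0, sub_zero, abs_of_nonneg hτ.1, div_mul_cancel₀ _ hd.ne'] at this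
    exact this.le
  · have := hγ 1 (right_mem_Icc.2 zero_le_one) _ hτ
    rw [hγ1, abs_of_nonneg (sub_nonneg.2 hτ.2), sub_mul, one_mul, div_mul_cancel₀ _ hd.ne'] at this
    rw [this, dist_comm]
    linarith

/-- Hopf–Rinow: the radii of compact closed balls about a point form a nonempty clopen subset
of `ℝ`. Openness comes from local compactness, closedness from completeness; in both steps the
geodesics put every point of `closedBall a (r + t)` within `t` of `closedBall a r`. -/
theorem IsGeodesicSpace.properSpace [CompleteSpace X] [LocallyCompactSpace X]
    (hX : IsGeodesicSpace X) : ProperSpace X := by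
  refine ⟨fun a => ?_⟩
  set S : Set ℝ := {r | IsCompact (closedBall a r)}
  have hS_mono : ∀ {r r'}, r' ≤ r → r ∈ S → r' ∈ S := fun h hr =>
    hr.of_isClosed_subset isClosed_closedBall (closedBall_subset_closedBall h)
  have h0 : (0 : ℝ) ∈ S := by simp [S]
  have hS_max : ∀ {r}, r ∈ S → max r 0 ∈ S := fun {r} hr => by
    rcases le_total r 0 with h | h
    · rwa [max_eq_right h]
    · rwa [max_eq_left h]
  have hS_open : IsOpen S := by
    refine Metric.isOpen_iff.2 fun r hr => ?_
    obtain ⟨δ, hδ, hK⟩ := (hS_max hr).exists_isCompact_cthickening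
    have hsub : closedBall a (max r 0 + δ) ⊆ cthickening δ (closedBall a (max r 0)) :=
      fun x hx => by
        obtain ⟨z, hz, hxz⟩ :=
          hX.exists_dist_le_of_dist_le_add (le_max_right r 0) hδ.le (mem_closedBall.1 hx)
        exact mem_cthickening_of_dist_le x z δ _ hz hxz
    refine ⟨δ, hδ, fun r' hr' => hS_mono ?_ (hK.of_isClosed_subset isClosed_closedBall hsub)⟩
    have := (abs_lt.1 (Real.dist_eq r' r ▸ mem_ball.1 hr')).2
    linarith [le_max_left r 0]
  have hS_closed : IsClosed S := by
    refine isClosed_of_closure_subset fun r hr => ?_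
    refine TotallyBounded.isCompact_of_isClosed
      (Metric.totallyBounded_iff.2 fun δ hδ => ?_) isClosed_closedBall
    obtain ⟨b, hb, hrb⟩ := Metric.mem_closure_iff.1 hr (δ / 2) (half_pos hδ)
    obtain ⟨t, ht, hcover⟩ :=
      Metric.totallyBounded_iff.1 (hS_max hb).totallyBounded (δ / 2) (half_pos hδ)
    refine ⟨t, ht, fun x hx => ?_⟩
    have hxr : dist x a ≤ max b 0 + δ / 2 := by
      have := (abs_lt.1 (Real.dist_eq r b ▸ hrb)).2
      linarith [mem_closedBall.1 hx, le_max_left b 0]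
    obtain ⟨z, hz, hxz⟩ := hX.exists_dist_le_of_dist_le_add (le_max_right b 0) (half_pos hδ).le hxr
    obtain ⟨y, hy, hzy⟩ := mem_iUnion₂.1 (hcover (mem_closedBall.2 hz))
    refine mem_iUnion₂.2 ⟨y, hy, mem_ball.2 ?_⟩
    linarith [dist_triangle x z y, mem_ball.1 hzy]
  exact eq_univ_iff_forall.1 (IsClopen.eq_univ ⟨hS_closed, hS_open⟩ ⟨0, h0⟩)

end Geodesic

section ChangeOfVariables

variable {E : Type*} [NormedAddCommGroup E] [NormedSpace ℝ E] [FiniteDimensional ℝ E]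
  [MeasurableSpace E] [BorelSpace E]

theorem ofReal_mul_setLIntegral_comp_le_of_le_abs_det (μ : Measure E) [μ.IsAddHaarMeasure]
    {s : Set E} (hs : MeasurableSet s) {f : E → E} {f' : E → E →L[ℝ] E}
    (hf' : ∀ x ∈ s, HasFDerivWithinAt f (f' x) s x) (hf : InjOn f s) {ε : ℝ}
    (hdet : ∀ x ∈ s, ε ≤ |(f' x).det|) (g : E → ℝ≥0∞) :
    ENNReal.ofReal ε * ∫⁻ x in s, g (f x) ∂μ ≤ ∫⁻ x in f '' s, g x ∂μ := by
  rw [lintegral_image_eq_lintegral_abs_det_fderiv_mul μ hs hf' hf g,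
    ← lintegral_const_mul' _ _ ENNReal.ofReal_ne_top]
  exact setLIntegral_mono' hs fun x hx => by gcongr; exact hdet x hx

end ChangeOfVariables

namespace IsAdmissibleDiffeo

variable {n : ℕ} {Ω : Set (EuclideanSpace ℝ (Fin n))}
  {φ : EuclideanSpace ℝ (Fin n) → EuclideanSpace ℝ (Fin n)}

theorem aemeasurable (hΩ : MeasurableSet Ω) (hφ : IsAdmissibleDiffeo Ω φ) :
    AEMeasurable φ (volume.restrict Ω) :=
  hφ.2.1.continuousOn.aemeasurable hΩ

theorem setLIntegral_comp_le (hΩ : IsOpen Ω) (hφ : IsAdmissibleDiffeo Ω φ) {ε : ℝ} (hε : 0 < ε)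
    (hdet : ∀ x ∈ Ω, ε ≤ (fderiv ℝ φ x).det) (g : EuclideanSpace ℝ (Fin n) → ℝ≥0∞) :
    ∫⁻ x in Ω, g (φ x) ≤ (ENNReal.ofReal ε)⁻¹ * ∫⁻ x in Ω, g x := by
  have hderiv : ∀ x ∈ Ω, HasFDerivWithinAt φ (fderiv ℝ φ x) Ω x := fun x hx =>
    ((hφ.2.1.differentiableOn one_ne_zero).differentiableAt
      (hΩ.mem_nhds hx)).hasFDerivAt.hasFDerivWithinAt
  have := ofReal_mul_setLIntegral_comp_le_of_le_abs_det volume hΩ.measurableSet hderiv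
    hφ.1.injOn (fun x hx => (hdet x hx).trans (le_abs_self _)) g
  rwa [hφ.1.image_eq, ENNReal.mul_le_iff_le_inv (by simpa using hε) ENNReal.ofReal_ne_top] at this

end IsAdmissibleDiffeo

section LpComposition

variable {α E ι : Type*} [MeasurableSpace α] [NormedAddCommGroup E] {ν : Measure α}
  {p : ℝ≥0∞}

theorem eLpNorm_comp_le_of_lintegral_comp_le {φ : α → α} {C : ℝ≥0∞}
    (hφ : ∀ g : α → ℝ≥0∞, ∫⁻ x, g (φ x) ∂ν ≤ C * ∫⁻ x, g x ∂ν) (hp0 : p ≠ 0) (hp : p ≠ ∞)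
    (f : α → E) : eLpNorm (f ∘ φ) p ν ≤ C ^ (1 / p.toReal) * eLpNorm f p ν := by
  simp only [eLpNorm_eq_lintegral_rpow_enorm_toReal hp0 hp, Function.comp_apply]
  rw [← ENNReal.mul_rpow_of_nonneg _ _ (by positivity)]
  exact ENNReal.rpow_le_rpow (hφ _) (by positivity)

theorem tendsto_eLpNorm_sub_of_tendstoUniformlyOn [IsFiniteMeasure ν] {l : Filter ι}
    {F : ι → α → E} {G : α → E} {s : Set α} (hF : TendstoUniformlyOn F G l s)
    (hs : ∀ᵐ x ∂ν, x ∈ s) : Tendsto (fun i => eLpNorm (F i - G) p ν) l (𝓝 0) := by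
  rw [ENNReal.tendsto_nhds_zero]
  intro η hη
  obtain ⟨δ, hδ, hδη⟩ := ENNReal.exists_nnreal_pos_mul_lt
    (ENNReal.rpow_ne_top_of_nonneg (inv_nonneg.2 ENNReal.toReal_nonneg) (measure_ne_top ν univ))
    hη.ne'
  filter_upwards [Metric.tendstoUniformlyOn_iff.1 hF δ hδ] with i hi
  calc eLpNorm (F i - G) p ν ≤ ν univ ^ p.toReal⁻¹ * ENNReal.ofReal δ :=
        eLpNorm_le_of_ae_bound <| hs.mono fun x hx => by
          simpa [← dist_eq_norm, dist_comm] using (hi x hx).le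
    _ ≤ η := by rw [mul_comm, ENNReal.ofReal_coe_nnreal]; exact hδη.le

end LpComposition

section Density

variable {α E ι : Type*} [MetricSpace α] [WeaklyLocallyCompactSpace α] [MeasurableSpace α]
  [BorelSpace α] [NormedAddCommGroup E] [NormedSpace ℝ E] {ν : Measure α} {p : ℝ≥0∞}

theorem tendsto_eLpNorm_comp_sub_comp_of_tendstoUniformlyOn [IsFiniteMeasure ν] [ν.Regular]
    (hp1 : 1 ≤ p) (hp : p ≠ ∞) {l : Filter ι} {φ : ι → α → α} {ψ : α → α} {s : Set α}
    (hφψ : TendstoUniformlyOn φ ψ l s) (hs : ∀ᵐ x ∂ν, x ∈ s)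
    (hφm : ∀ i, AEMeasurable (φ i) ν) (hψm : AEMeasurable ψ ν) {C : ℝ≥0∞} (hC : C ≠ ∞)
    (hφC : ∀ i, ∀ g : α → ℝ≥0∞, ∫⁻ x, g (φ i x) ∂ν ≤ C * ∫⁻ x, g x ∂ν)
    (hψC : ∀ g : α → ℝ≥0∞, ∫⁻ x, g (ψ x) ∂ν ≤ C * ∫⁻ x, g x ∂ν)
    {f : α → E} (hf : StronglyMeasurable f) (hfp : MemLp f p ν) :
    Tendsto (fun i => eLpNorm (f ∘ φ i - f ∘ ψ) p ν) l (𝓝 0) := by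
  have hp0 : p ≠ 0 := (zero_lt_one.trans_le hp1).ne'
  rw [ENNReal.tendsto_nhds_zero]
  intro η hη
  set K := C ^ (1 / p.toReal)
  have hK : K ≠ ∞ := ENNReal.rpow_ne_top_of_nonneg (by positivity) hC
  obtain ⟨g, hg_supp, hfg, hg_cont, -⟩ := hfp.exists_hasCompactSupport_eLpNorm_sub_le hp
    (ε := η / 2 / 2 / K) (ENNReal.div_pos (by simpa using hη.ne') hK).ne'
  have hg := hg_cont.stronglyMeasurable_of_hasCompactSupport hg_supp
  have hfg_comp : ∀ ϑ : α → α, AEMeasurable ϑ ν → AEStronglyMeasurable ((f - g) ∘ ϑ) ν :=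
    fun ϑ hϑ => (hf.sub hg).aestronglyMeasurable.comp_aemeasurable hϑ
  have hg_comp : ∀ i, AEStronglyMeasurable (g ∘ φ i - g ∘ ψ) ν := fun i =>
    (hg.aestronglyMeasurable.comp_aemeasurable (hφm i)).sub
      (hg.aestronglyMeasurable.comp_aemeasurable hψm)
  have hK_fg : ∀ ϑ : α → α, (∀ g : α → ℝ≥0∞, ∫⁻ x, g (ϑ x) ∂ν ≤ C * ∫⁻ x, g x ∂ν) →
      eLpNorm ((f - g) ∘ ϑ) p ν ≤ η / 2 / 2 := fun ϑ hϑ =>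
    calc eLpNorm ((f - g) ∘ ϑ) p ν ≤ K * eLpNorm (f - g) p ν :=
          eLpNorm_comp_le_of_lintegral_comp_le hϑ hp0 hp _
      _ ≤ K * (η / 2 / 2 / K) := by gcongr
      _ ≤ η / 2 / 2 := ENNReal.mul_div_le
  have hg_conv := tendsto_eLpNorm_sub_of_tendstoUniformlyOn (p := p)
    ((hg_supp.uniformContinuous_of_continuous hg_cont).comp_tendstoUniformlyOn hφψ) hs
  filter_upwards [ENNReal.tendsto_nhds_zero.1 hg_conv (η / 2) (by simpa using hη.ne')] with i hi
  have hsplit : f ∘ φ i - f ∘ ψ = ((f - g) ∘ φ i + (g ∘ φ i - g ∘ ψ)) - (f - g) ∘ ψ := by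
    ext x; simp only [Pi.sub_apply, Pi.add_apply, Function.comp_apply]; abel
  calc eLpNorm (f ∘ φ i - f ∘ ψ) p ν
      ≤ eLpNorm ((f - g) ∘ φ i) p ν + eLpNorm (g ∘ φ i - g ∘ ψ) p ν
          + eLpNorm ((f - g) ∘ ψ) p ν := by
        rw [hsplit]
        exact (eLpNorm_sub_le ((hfg_comp _ (hφm i)).add (hg_comp i)) (hfg_comp _ hψm) hp1).trans
          (by gcongr; exact eLpNorm_add_le (hfg_comp _ (hφm i)) (hg_comp i) hp1)
    _ ≤ η / 2 / 2 + η / 2 + η / 2 / 2 :=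
        add_le_add (add_le_add (hK_fg _ (hφC i)) hi) (hK_fg _ hψC)
    _ = η := by rw [add_right_comm, ENNReal.add_halves, ENNReal.add_halves]

end Density

theorem ENNReal.tendsto_of_le_add_of_le_add {ι : Type*} {l : Filter ι} {a e : ι → ℝ≥0∞}
    {b : ℝ≥0∞} (he : Tendsto e l (𝓝 0)) (hup : ∀ i, a i ≤ b + e i) (hlo : ∀ i, b ≤ a i + e i) :
    Tendsto a l (𝓝 b) := by
  refine tendsto_of_tendsto_of_tendsto_of_le_of_le ?_ ?_
    (fun i => tsub_le_iff_right.2 (hlo i)) hup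
  · simpa using ENNReal.Tendsto.sub tendsto_const_nhds he (Or.inr ENNReal.zero_ne_top)
  · simpa using tendsto_const_nhds.add he

section LpPerturbation

variable {α E F ι : Type*} [MeasurableSpace α] [NormedAddCommGroup E] [NormedAddCommGroup F]
  {ν : Measure α} {p : ℝ≥0∞}

theorem tendsto_eLpNorm_of_norm_sub_le {l : Filter ι} {u : ι → α → E} {w : α → E}
    {v : ι → α → F} (hp1 : 1 ≤ p) (hu : ∀ i, AEStronglyMeasurable (u i) ν)
    (hw : AEStronglyMeasurable w ν) (huv : ∀ i x, ‖u i x - w x‖ ≤ ‖v i x‖)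
    (hv : Tendsto (fun i => eLpNorm (v i) p ν) l (𝓝 0)) :
    Tendsto (fun i => eLpNorm (u i) p ν) l (𝓝 (eLpNorm w p ν)) := by
  have hd : ∀ i, eLpNorm (u i - w) p ν ≤ eLpNorm (v i) p ν := fun i => eLpNorm_mono (huv i)
  refine ENNReal.tendsto_of_le_add_of_le_add hv (fun i => ?_) (fun i => ?_)
  · calc eLpNorm (u i) p ν = eLpNorm (w + (u i - w)) p ν := by rw [add_sub_cancel]
      _ ≤ eLpNorm w p ν + eLpNorm (u i - w) p ν := eLpNorm_add_le hw ((hu i).sub hw) hp1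
      _ ≤ eLpNorm w p ν + eLpNorm (v i) p ν := by gcongr; exact hd i
  · calc eLpNorm w p ν = eLpNorm (u i - (u i - w)) p ν := by rw [sub_sub_cancel]
      _ ≤ eLpNorm (u i) p ν + eLpNorm (u i - w) p ν := eLpNorm_sub_le (hu i) ((hu i).sub hw) hp1
      _ ≤ eLpNorm (u i) p ν + eLpNorm (v i) p ν := by gcongr; exact hd i

theorem lintegral_ofReal_norm_sq_eq_eLpNorm_sq (u : α → E) :
    ∫⁻ x, ENNReal.ofReal (‖u x‖ ^ 2) ∂ν = eLpNorm u 2 ν ^ 2 := by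
  have := eLpNorm_nnreal_pow_eq_lintegral (f := u) (μ := ν) (p := 2) two_ne_zero
  simp only [NNReal.coe_ofNat, ENNReal.rpow_two] at this
  rw [← ENNReal.coe_ofNat, this]
  congr 1 with x
  rw [← ofReal_norm, ENNReal.ofReal_pow (norm_nonneg _)]

end LpPerturbation


section MetricValued

variable {α X ι : Type*} [MeasurableSpace α] [MetricSpace X] {ν : Measure α}

open scoped lp in
theorem exists_memLp_two_norm_sub_eq_dist [TopologicalSpace.SeparableSpace X] {T : α → X}
    (hT : StronglyMeasurable T) {a : X} (hTa : ∫⁻ x, ENNReal.ofReal (dist (T x) a ^ 2) ∂ν < ∞) :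
    ∃ G : α → ℓ^∞(ℕ, ℝ), StronglyMeasurable G ∧ MemLp G 2 ν ∧
      ∀ x y, ‖G x - G y‖ = dist (T x) (T y) := by
  have hK := kuratowskiEmbedding.isometry X
  have hG : StronglyMeasurable fun x => kuratowskiEmbedding X (T x) - kuratowskiEmbedding X a :=
    (hK.continuous.comp_stronglyMeasurable hT).sub stronglyMeasurable_const
  refine ⟨_, hG, ⟨hG.aestronglyMeasurable, lt_top_iff_ne_top.2 fun h => hTa.ne ?_⟩,
    fun x y => by rw [sub_sub_sub_cancel_right, ← dist_eq_norm, hK.dist_eq]⟩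
  rw [← ENNReal.pow_eq_top_iff.2 ⟨h, two_ne_zero⟩, ← lintegral_ofReal_norm_sq_eq_eLpNorm_sq]
  simp only [← dist_eq_norm, hK.dist_eq]

theorem tendsto_lintegral_dist_sq_of_dist_le [MeasurableSpace X] [BorelSpace X]
    [SecondCountableTopology X] {E : Type*} [NormedAddCommGroup E]
    {l : Filter ι} {f : ι → α → X} {g h : α → X} {v : ι → α → E}
    (hf : ∀ i, AEMeasurable (f i) ν) (hg : AEMeasurable g ν) (hh : AEMeasurable h ν)
    (hfg : ∀ i x, dist (f i x) (g x) ≤ ‖v i x‖)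
    (hv : Tendsto (fun i => eLpNorm (v i) 2 ν) l (𝓝 0)) :
    Tendsto (fun i => ∫⁻ x, ENNReal.ofReal (dist (f i x) (h x) ^ 2) ∂ν) l
      (𝓝 (∫⁻ x, ENNReal.ofReal (dist (g x) (h x) ^ 2) ∂ν)) := by
  have hsq : ∀ k : α → X, ∫⁻ x, ENNReal.ofReal (dist (k x) (h x) ^ 2) ∂ν
      = eLpNorm (fun x => dist (k x) (h x)) 2 ν ^ 2 := fun k => by
    simpa only [Real.norm_eq_abs, abs_dist] using
      lintegral_ofReal_norm_sq_eq_eLpNorm_sq (ν := ν) fun x => dist (k x) (h x)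
  simp only [hsq]
  refine ((ENNReal.continuous_pow 2).tendsto _).comp
    (tendsto_eLpNorm_of_norm_sub_le one_le_two (fun i => ((hf i).dist hh).aestronglyMeasurable)
      (hg.dist hh).aestronglyMeasurable (fun i x => ?_) hv)
  rw [Real.norm_eq_abs]
  exact (abs_dist_sub_le _ _ _).trans (hfg i x)

end MetricValued

theorem data_term_continuity_general
    {n : ℕ}
    (Ω : Set (EuclideanSpace ℝ (Fin n))) (hΩo : IsOpen Ω) (hΩb : Bornology.IsBounded Ω)
    {X : Type*} [MetricSpace X] [CompleteSpace X] [LocallyCompactSpace X]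
    [MeasurableSpace X] [BorelSpace X]
    (hgeo : ∀ x y : X, ∃ γ : ℝ → X, γ 0 = x ∧ γ 1 = y ∧
      ∀ s ∈ Icc (0:ℝ) 1, ∀ t ∈ Icc (0:ℝ) 1, dist (γ s) (γ t) = |s - t| * dist x y)
    (T R : EuclideanSpace ℝ (Fin n) → X) (hT : Measurable T) (hR : Measurable R)
    (aT : X)
    (hTa : ∫⁻ ω in Ω, ENNReal.ofReal (dist (T ω) aT ^ 2) < ⊤)
    (ε : ℝ) (hε : 0 < ε)
    (φ : ℕ → EuclideanSpace ℝ (Fin n) → EuclideanSpace ℝ (Fin n))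
    (φhat : EuclideanSpace ℝ (Fin n) → EuclideanSpace ℝ (Fin n))
    (hφ : ∀ j, IsAdmissibleDiffeo Ω (φ j)) (hφhat : IsAdmissibleDiffeo Ω φhat)
    (hdet : ∀ j, ∀ x ∈ Ω, ε ≤ (fderiv ℝ (φ j) x).det)
    (hdethat : ∀ x ∈ Ω, ε ≤ (fderiv ℝ φhat x).det)
    (hconv : TendstoUniformlyOn φ φhat atTop Ω) :
    Tendsto (fun j => ∫⁻ x in Ω, ENNReal.ofReal (dist (T (φ j x)) (R x) ^ 2))
      atTop (nhds (∫⁻ x in Ω, ENNReal.ofReal (dist (T (φhat x)) (R x) ^ 2))) := by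
  have : ProperSpace X := IsGeodesicSpace.properSpace hgeo
  have hΩm := hΩo.measurableSet
  have : IsFiniteMeasure (volume.restrict Ω) := isFiniteMeasure_restrict.2 hΩb.measure_lt_top.ne
  have : (volume.restrict Ω).Regular :=
    Measure.Regular.restrict_of_measure_ne_top hΩb.measure_lt_top.ne
  obtain ⟨G, hG_meas, hG, hG_dist⟩ := exists_memLp_two_norm_sub_eq_dist hT.stronglyMeasurable hTa
  have hD := tendsto_eLpNorm_comp_sub_comp_of_tendstoUniformlyOn one_le_two ENNReal.ofNat_ne_top
    hconv (ae_restrict_mem hΩm) (fun j => (hφ j).aemeasurable hΩm) (hφhat.aemeasurable hΩm)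
    (by simpa using hε) (fun j => (hφ j).setLIntegral_comp_le hΩo hε (hdet j))
    (hφhat.setLIntegral_comp_le hΩo hε hdethat) hG_meas hG
  exact tendsto_lintegral_dist_sq_of_dist_le
    (fun j => hT.comp_aemeasurable ((hφ j).aemeasurable hΩm))
    (hT.comp_aemeasurable (hφhat.aemeasurable hΩm)) hR.aemeasurable
    (fun j x => (hG_dist _ _).ge) hD

/-- For `T, R ∈ L²(Ω, X)` with `X` a locally compact Hadamard space, and
admissible diffeomorphisms `φ⁽ʲ⁾ → φ̂` uniformly on `Ω` with Jacobian determinants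
bounded below by `ε > 0`, the data terms `∫_Ω d(T∘φ⁽ʲ⁾, R)²` converge to
`∫_Ω d(T∘φ̂, R)²`. -/
theorem data_term_continuity
    {n : ℕ} (hn : 1 ≤ n)
    (Ω : Set (EuclideanSpace ℝ (Fin n))) (hΩo : IsOpen Ω) (hΩb : Bornology.IsBounded Ω)
    {X : Type*} [MetricSpace X] [CompleteSpace X] [LocallyCompactSpace X]
    [MeasurableSpace X] [BorelSpace X]
    (hgeo : ∀ x y : X, ∃ γ : ℝ → X, γ 0 = x ∧ γ 1 = y ∧
      ∀ s ∈ Icc (0:ℝ) 1, ∀ t ∈ Icc (0:ℝ) 1, dist (γ s) (γ t) = |s - t| * dist x y)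
    (h4 : ∀ x y v w : X, dist x v ^ 2 + dist y w ^ 2 ≤
      dist x w ^ 2 + dist y v ^ 2 + 2 * dist x y * dist v w)
    (T R : EuclideanSpace ℝ (Fin n) → X) (hT : Measurable T) (hR : Measurable R)
    (aT aR : X)
    (hTa : ∫⁻ ω in Ω, ENNReal.ofReal (dist (T ω) aT ^ 2) < ⊤)
    (hRa : ∫⁻ ω in Ω, ENNReal.ofReal (dist (R ω) aR ^ 2) < ⊤)
    (ε : ℝ) (hε : 0 < ε)
    (φ : ℕ → EuclideanSpace ℝ (Fin n) → EuclideanSpace ℝ (Fin n))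
    (φhat : EuclideanSpace ℝ (Fin n) → EuclideanSpace ℝ (Fin n))
    (hφ : ∀ j, IsAdmissibleDiffeo Ω (φ j)) (hφhat : IsAdmissibleDiffeo Ω φhat)
    (hdet : ∀ j, ∀ x ∈ Ω, ε ≤ (fderiv ℝ (φ j) x).det)
    (hdethat : ∀ x ∈ Ω, ε ≤ (fderiv ℝ φhat x).det)
    (hconv : TendstoUniformlyOn φ φhat atTop Ω) :
    Tendsto (fun j => ∫⁻ x in Ω, ENNReal.ofReal (dist (T (φ j x)) (R x) ^ 2))
      atTop (nhds (∫⁻ x in Ω, ENNReal.ofReal (dist (T (φhat x)) (R x) ^ 2))) :=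
  data_term_continuity_general Ω hΩo hΩb hgeo T R hT hR aT hTa ε hε φ φhat hφ hφhat hdet hdethat
    hconv
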